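/- arXiv:1012.2021 — 2 statements merged into one kernel-verified Lean document; each statement's English description precedes it below -/
import Mathlib

section
/- Let r ≥ 1 and ℓ ≥ 1 be integers, let A be an additive commutative group, and let L : (Fin r → ℤ) →+ A be an additive group homomorphism. For D ∈ A set s(D) := Nat.card {b : Fin r → ℕ | L (fun i ↦ (b i : ℤ)) = D} and m(D) := Nat.card {c : Fin r → Fin ℓ | L (fun i ↦ ((c i : ℕ) : ℤ)) = D}. Assume every fiber {b : Fin r → ℕ | L (fun i ↦ (b i : ℤ)) = E} is finite. Then for every D ∈ A the function E ↦ m(D − ℓ • E) · s(E) on A has finite support, and s(D) = ∑ᶠ E ∈ A, m(D − ℓ • E) · s(E). -/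
private lemma cast_split {r ℓ : ℕ} {A : Type*} [AddCommGroup A] (L : (Fin r → ℤ) →+ A)
    (c e : Fin r → ℕ) :
    L (fun i => ((c i + ℓ * e i : ℕ) : ℤ)) =
      L (fun i => (c i : ℤ)) + ℓ • L (fun i => (e i : ℤ)) := by
  have h : (fun i => ((c i + ℓ * e i : ℕ) : ℤ)) =
      (fun i => (c i : ℤ)) + ℓ • (fun i => (e i : ℤ)) := by
    funext i
    simp only [Pi.add_apply, Pi.smul_apply, smul_eq_mul]
    push_cast
    ring
  rw [h, map_add, map_nsmul]

private lemma key_card {r ℓ : ℕ} (hℓ : 0 < ℓ) {A : Type*} [AddCommGroup A]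
    (L : (Fin r → ℤ) →+ A) (D E : A) :
    Nat.card {c : Fin r → Fin ℓ | L (fun i => ((c i : ℕ) : ℤ)) = D - ℓ • E} *
      Nat.card {e : Fin r → ℕ | L (fun i => (e i : ℤ)) = E} =
    Nat.card {b : Fin r → ℕ | L (fun i => (b i : ℤ)) = D ∧
      L (fun i => ((b i / ℓ : ℕ) : ℤ)) = E} := by
  rw [← Nat.card_prod]
  apply Nat.card_congr
  refine
    { toFun := fun p => ⟨fun i => (p.1.1 i : ℕ) + ℓ * p.2.1 i, ?_, ?_⟩
      invFun := fun b => (⟨fun i => ⟨b.1 i % ℓ, Nat.mod_lt _ hℓ⟩, ?_⟩,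
        ⟨fun i => b.1 i / ℓ, ?_⟩)
      left_inv := ?_
      right_inv := ?_ }
  · rw [cast_split L (fun i => (p.1.1 i : ℕ)) p.2.1, p.1.2, p.2.2]
    abel
  · have h : ∀ i, ((p.1.1 i : ℕ) + ℓ * p.2.1 i) / ℓ = p.2.1 i := by
      intro i
      rw [Nat.add_mul_div_left _ _ hℓ, Nat.div_eq_of_lt (p.1.1 i).2, Nat.zero_add]
    simpa only [h, Set.mem_setOf_eq] using p.2.2
  · -- L (mod part) = D - ℓ • E
    have hb := b.2
    have hsplit : L (fun i => ((b.1 i % ℓ + ℓ * (b.1 i / ℓ) : ℕ) : ℤ)) =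
        L (fun i => ((b.1 i % ℓ : ℕ) : ℤ)) + ℓ • L (fun i => ((b.1 i / ℓ : ℕ) : ℤ)) :=
      cast_split L _ _
    have heq : (fun i => ((b.1 i % ℓ + ℓ * (b.1 i / ℓ) : ℕ) : ℤ)) =
        (fun i => (b.1 i : ℤ)) := by
      funext i; rw [Nat.mod_add_div]
    rw [heq, hb.1, hb.2] at hsplit
    simp only [Set.mem_setOf_eq]
    have : L (fun i => ((b.1 i % ℓ : ℕ) : ℤ)) = D - ℓ • E := by
      rw [eq_sub_iff_add_eq, ← hsplit]
    convert this using 2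
  · exact b.2.2
  · intro p
    ext i
    · simp only [Set.mem_setOf_eq]
      rw [Nat.add_mul_mod_self_left]
      exact Nat.mod_eq_of_lt (p.1.1 i).2
    · simp only
      rw [Nat.add_mul_div_left _ _ hℓ, Nat.div_eq_of_lt (p.1.1 i).2, Nat.zero_add]
  · intro b
    ext i
    simp only
    exact Nat.mod_add_div _ _

/-- Applying `h⁰` to the splitting of the Frobenius push-forward:
`s(D) = ∑ E, m(D - ℓ•E) * s(E)`, where `s(D)` counts lattice points of the positive
orthant of class `D` and `m(D)` counts points of the cube `{0,…,ℓ−1}^r` of class `D`. -/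
theorem stmt_1 (r ℓ : ℕ) (hr : 1 ≤ r) (hℓ : 1 ≤ ℓ) {A : Type*} [AddCommGroup A]
    (L : (Fin r → ℤ) →+ A)
    (hfin : ∀ E : A, {b : Fin r → ℕ | L (fun i => (b i : ℤ)) = E}.Finite) (D : A) :
    (Function.support fun E : A =>
        Nat.card {c : Fin r → Fin ℓ | L (fun i => ((c i : ℕ) : ℤ)) = D - ℓ • E} *
          Nat.card {b : Fin r → ℕ | L (fun i => (b i : ℤ)) = E}).Finite ∧
      Nat.card {b : Fin r → ℕ | L (fun i => (b i : ℤ)) = D} =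
        ∑ᶠ E : A,
          Nat.card {c : Fin r → Fin ℓ | L (fun i => ((c i : ℕ) : ℤ)) = D - ℓ • E} *
            Nat.card {b : Fin r → ℕ | L (fun i => (b i : ℤ)) = E} := by
  classical
  have hℓ' : 0 < ℓ := hℓ
  set g : (Fin r → ℕ) → A := fun b => L (fun i => ((b i / ℓ : ℕ) : ℤ)) with hg
  have hSfin := hfin D
  set FS : Finset (Fin r → ℕ) := hSfin.toFinset with hFS
  have key : ∀ E : A,
      Nat.card {c : Fin r → Fin ℓ | L (fun i => ((c i : ℕ) : ℤ)) = D - ℓ • E} *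
        Nat.card {b : Fin r → ℕ | L (fun i => (b i : ℤ)) = E} =
      (FS.filter (fun b => g b = E)).card := by
    intro E
    rw [key_card hℓ' L D E]
    have hset : {b : Fin r → ℕ | L (fun i => (b i : ℤ)) = D ∧
        L (fun i => ((b i / ℓ : ℕ) : ℤ)) = E} =
        ↑(FS.filter (fun b => g b = E)) := by
      ext b
      simp [hFS, Set.Finite.mem_toFinset, hg]
    rw [hset, Nat.card_coe_set_eq, Set.ncard_coe_finset]
  have hsupp : (Function.support fun E : A =>
      Nat.card {c : Fin r → Fin ℓ | L (fun i => ((c i : ℕ) : ℤ)) = D - ℓ • E} *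
        Nat.card {b : Fin r → ℕ | L (fun i => (b i : ℤ)) = E}) ⊆ ↑(FS.image g) := by
    intro E hE
    rw [Function.mem_support, key E] at hE
    obtain ⟨b, hb⟩ := Finset.card_ne_zero.mp hE
    rw [Finset.mem_coe, Finset.mem_image]
    exact ⟨b, (Finset.mem_filter.mp hb).1, (Finset.mem_filter.mp hb).2⟩
  constructor
  · exact Set.Finite.subset (FS.image g).finite_toSet hsupp
  · rw [finsum_eq_finset_sum_of_support_subset _ hsupp]
    have hcard : Nat.card {b : Fin r → ℕ | L (fun i => (b i : ℤ)) = D} = FS.card := by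
      rw [Nat.card_coe_set_eq]
      exact Set.ncard_eq_toFinset_card _ hSfin
    rw [hcard]
    rw [Finset.card_eq_sum_card_fiberwise (f := g) (t := FS.image g)
      (fun x hx => Finset.mem_image_of_mem g hx)]
    exact Finset.sum_congr rfl fun E _ => (key E).symm
end

section
/- Let r, ρ ≥ 1 and ℓ ≥ 1 be integers and let v₁, …, v_r : Fin ρ → ℕ be nonzero vectors. For a : Fin ρ → ℕ let s(a) be the (finite) number of tuples b : Fin r → ℕ with ∑_{i=1}^{r} b i • vᵢ = a. Define S, S_ℓ ∈ MvPowerSeries (Fin ρ) ℤ by: the coefficient of S at a is s(a), and the coefficient of S_ℓ at a is s(a') if a = ℓ • a' for some a' : Fin ρ → ℕ and 0 otherwise. Define M := ∏_{i=1}^{r} ∑_{j=0}^{ℓ−1} MvPowerSeries.monomial (j • vᵢ) 1. Then S = M * S_ℓ. -/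
open Finset MvPowerSeries

private lemma prod_monomial_aux {σ ι : Type*} (t : Finset ι) (c : ι → (σ →₀ ℕ)) :
    ∏ i ∈ t, (MvPowerSeries.monomial (R := ℤ) (c i) 1) =
      MvPowerSeries.monomial (R := ℤ) (∑ i ∈ t, c i) 1 := by
  classical
  induction t using Finset.induction with
  | empty => simp [MvPowerSeries.monomial_zero_one]
  | insert _ _ h ih =>
      rw [Finset.prod_insert h, ih, Finset.sum_insert h,
        MvPowerSeries.monomial_mul_monomial, one_mul]

private lemma fin_aux (r ρ : ℕ) (v : Fin r → Fin ρ → ℕ) (hv : ∀ i, v i ≠ 0)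
    (a : Fin ρ → ℕ) : {b : Fin r → ℕ | ∑ i, b i • v i = a}.Finite := by
  have hsub : {b : Fin r → ℕ | ∑ i, b i • v i = a} ⊆
      Set.pi Set.univ (fun _ : Fin r => Set.Iic (∑ k, a k)) := by
    intro b hb
    simp only [Set.mem_setOf_eq] at hb
    intro i _
    obtain ⟨k, hk⟩ := Function.ne_iff.mp (hv i)
    have hk' : 1 ≤ v i k := Nat.one_le_iff_ne_zero.mpr hk
    have h1 : b i ≤ b i * v i k := Nat.le_mul_of_pos_right _ hk'
    have h2 : b i * v i k ≤ a k := by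
      have h := Finset.single_le_sum (f := fun i' => b i' * v i' k)
        (fun i' _ => Nat.zero_le _) (Finset.mem_univ i)
      calc b i * v i k ≤ ∑ i', b i' * v i' k := h
        _ = a k := by
            rw [← hb]
            simp [Finset.sum_apply, Pi.smul_apply, smul_eq_mul]
    have h3 : a k ≤ ∑ k', a k' :=
      Finset.single_le_sum (fun _ _ => Nat.zero_le _) (Finset.mem_univ k)
    exact Set.mem_Iic.mpr (h1.trans (h2.trans h3))
  exact (Set.Finite.pi fun _ => Set.finite_Iic _).subset hsub

private lemma key_aux (r ρ ℓ : ℕ) (v : Fin r → Fin ρ → ℕ) (j b' : Fin r → ℕ) :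
    ∑ i, (j i + ℓ * b' i) • v i = (∑ i, j i • v i) + ℓ • ∑ i, b' i • v i := by
  funext k
  simp [Finset.sum_apply, Pi.add_apply, Pi.smul_apply, smul_eq_mul, add_mul,
    Finset.sum_add_distrib, Finset.mul_sum, mul_assoc]

private lemma count_split (r ρ ℓ : ℕ) (hℓ : 1 ≤ ℓ) (v : Fin r → Fin ρ → ℕ)
    (hv : ∀ i, v i ≠ 0) (a : Fin ρ → ℕ) :
    Nat.card {b : Fin r → ℕ | ∑ i, b i • v i = a}
      = ∑ j ∈ Fintype.piFinset (fun _ : Fin r => Finset.range ℓ),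
          Nat.card {b' : Fin r → ℕ | (∑ i, j i • v i) + ℓ • ∑ i, b' i • v i = a} := by
  classical
  have hℓ0 : 0 < ℓ := hℓ
  have hfin := fin_aux r ρ v hv a
  have hfin' : ∀ j : Fin r → ℕ,
      {b' : Fin r → ℕ | (∑ i, j i • v i) + ℓ • ∑ i, b' i • v i = a}.Finite := by
    intro j
    have hset : {b' : Fin r → ℕ | (∑ i, j i • v i) + ℓ • ∑ i, b' i • v i = a}
        = (fun b' : Fin r → ℕ => fun i => j i + ℓ * b' i) ⁻¹'
            {b : Fin r → ℕ | ∑ i, b i • v i = a} := by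
      ext b'
      simp only [Set.mem_setOf_eq, Set.mem_preimage, key_aux r ρ ℓ v j b']
    rw [hset]
    apply hfin.preimage
    intro x _ y _ hxy
    funext i
    have h2 : j i + ℓ * x i = j i + ℓ * y i := congrFun hxy i
    have h3 : ℓ * x i = ℓ * y i := by omega
    exact Nat.eq_of_mul_eq_mul_left (by omega) h3
  rw [Nat.card_coe_set_eq, Set.ncard_eq_toFinset_card _ hfin]
  rw [Finset.card_eq_sum_card_fiberwise
    (f := fun b : Fin r → ℕ => fun i => b i % ℓ)
    (t := Fintype.piFinset (fun _ : Fin r => Finset.range ℓ))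
    (fun b _ => by simp [Fintype.mem_piFinset, Nat.mod_lt _ hℓ0])]
  refine Finset.sum_congr rfl fun j hj => ?_
  have hjlt : ∀ i, j i < ℓ := by
    intro i
    have := (Fintype.mem_piFinset).mp hj i
    simpa using this
  rw [Nat.card_coe_set_eq, Set.ncard_eq_toFinset_card _ (hfin' j)]
  refine Finset.card_nbij' (fun b => fun i => b i / ℓ) (fun b' => fun i => j i + ℓ * b' i)
    ?_ ?_ ?_ ?_
  · intro b hb
    simp only [Finset.mem_coe, Finset.mem_filter, Set.Finite.mem_toFinset, Set.mem_setOf_eq] at hb ⊢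
    obtain ⟨hb1, hb2⟩ := hb
    have hb3 : (fun i => j i + ℓ * (b i / ℓ)) = b := by
      funext i
      have hmod : b i % ℓ = j i := congrFun hb2 i
      have := Nat.div_add_mod (b i) ℓ
      omega
    rw [← key_aux r ρ ℓ v j (fun i => b i / ℓ)]
    calc ∑ i, (j i + ℓ * (b i / ℓ)) • v i = ∑ i, b i • v i :=
        Finset.sum_congr rfl fun i _ => by rw [congrFun hb3 i]
      _ = a := hb1
  · intro b' hb'
    simp only [Finset.mem_coe, Set.Finite.mem_toFinset, Set.mem_setOf_eq] at hb'
    simp only [Finset.mem_coe, Finset.mem_filter, Set.Finite.mem_toFinset, Set.mem_setOf_eq]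
    constructor
    · rw [key_aux r ρ ℓ v j b']
      exact hb'
    · funext i
      show (j i + ℓ * b' i) % ℓ = j i
      rw [Nat.add_mul_mod_self_left, Nat.mod_eq_of_lt (hjlt i)]
  · intro b hb
    simp only [Finset.mem_coe, Finset.mem_filter, Set.Finite.mem_toFinset, Set.mem_setOf_eq] at hb
    funext i
    show j i + ℓ * (b i / ℓ) = b i
    have hmod : b i % ℓ = j i := congrFun hb.2 i
    have := Nat.div_add_mod (b i) ℓ
    omega
  · intro b' _
    funext i
    show (j i + ℓ * b' i) / ℓ = b' i
    rw [Nat.add_mul_div_left _ _ hℓ0, Nat.div_eq_of_lt (hjlt i), zero_add]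

/-- The central generating-function identity `S(x) = M(x) · S(x^ℓ)` of the paper:
with `s(a)` the number of tuples `b : Fin r → ℕ` with `∑ i, b i • vᵢ = a`,
`S` the series with coefficients `s(a)`, `Sₗ` the series with coefficient `s(a')`
at `a = ℓ • a'` and `0` at exponents not of this form, and
`M = ∏ i, (1 + x^{vᵢ} + ⋯ + x^{(ℓ−1)vᵢ})`, one has `S = M * Sₗ`. -/
theorem stmt_5 (r ρ ℓ : ℕ) (hr : 1 ≤ r) (hρ : 1 ≤ ρ) (hℓ : 1 ≤ ℓ)
    (v : Fin r → Fin ρ → ℕ) (hv : ∀ i, v i ≠ 0)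
    (s : (Fin ρ → ℕ) → ℕ)
    (hs : ∀ a, s a = Nat.card {b : Fin r → ℕ | ∑ i, b i • v i = a})
    (S Sₗ : MvPowerSeries (Fin ρ) ℤ)
    (hS : ∀ a : Fin ρ → ℕ,
      MvPowerSeries.coeff (R := ℤ) (Finsupp.equivFunOnFinite.symm a) S = (s a : ℤ))
    (hSₗ₁ : ∀ a' : Fin ρ → ℕ,
      MvPowerSeries.coeff (R := ℤ) (Finsupp.equivFunOnFinite.symm (ℓ • a')) Sₗ = (s a' : ℤ))
    (hSₗ₂ : ∀ a : Fin ρ → ℕ, (∀ a' : Fin ρ → ℕ, a ≠ ℓ • a') →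
      MvPowerSeries.coeff (R := ℤ) (Finsupp.equivFunOnFinite.symm a) Sₗ = 0) :
    S = (∏ i : Fin r, ∑ j ∈ Finset.range ℓ,
        MvPowerSeries.monomial (R := ℤ) (Finsupp.equivFunOnFinite.symm (j • v i)) 1) * Sₗ := by
  classical
  have hℓ0 : 0 < ℓ := hℓ
  -- expand the product M as a sum of monomials
  have hM : (∏ i : Fin r, ∑ j ∈ Finset.range ℓ,
        MvPowerSeries.monomial (R := ℤ) (Finsupp.equivFunOnFinite.symm (j • v i)) 1)
      = ∑ p ∈ Fintype.piFinset (fun _ : Fin r => Finset.range ℓ),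
          MvPowerSeries.monomial (R := ℤ)
            (∑ i, Finsupp.equivFunOnFinite.symm (p i • v i)) 1 := by
    rw [Finset.prod_univ_sum]
    exact Finset.sum_congr rfl fun p _ => prod_monomial_aux _ _
  apply MvPowerSeries.ext
  intro n
  set a : Fin ρ → ℕ := ⇑n with ha
  have hn : Finsupp.equivFunOnFinite.symm a = n := Finsupp.equivFunOnFinite_symm_coe n
  have hLHS : MvPowerSeries.coeff (R := ℤ) n S = (s a : ℤ) := by rw [← hn]; exact hS a
  rw [hLHS, hM, Finset.sum_mul, map_sum]
  -- coefficient of each term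
  rw [hs a, count_split r ρ ℓ hℓ v hv a, Nat.cast_sum]
  refine Finset.sum_congr rfl fun p hp => ?_
  set C : Fin ρ →₀ ℕ := ∑ i, Finsupp.equivFunOnFinite.symm (p i • v i) with hCdef
  have hCcoe : ∀ k, C k = ∑ i, p i * v i k := by
    intro k
    rw [hCdef, Finsupp.finset_sum_apply]
    simp [Finsupp.coe_equivFunOnFinite_symm, Pi.smul_apply, smul_eq_mul]
  have hCfun : ⇑C = ∑ i, p i • v i := by
    funext k
    rw [hCcoe k]
    simp [Finset.sum_apply, Pi.smul_apply, smul_eq_mul]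
  rw [MvPowerSeries.coeff_monomial_mul, one_mul]
  by_cases hle : C ≤ n
  · rw [if_pos hle]
    have hlek : ∀ k, C k ≤ a k := fun k => hle k
    by_cases hex : ∃ a' : Fin ρ → ℕ, (fun k => a k - C k) = ℓ • a'
    · obtain ⟨a', ha'⟩ := hex
      have hnsub : n - C = Finsupp.equivFunOnFinite.symm (ℓ • a') := by
        ext k
        have h1 : (n - C) k = a k - C k := by
          rw [Finsupp.coe_tsub]; rfl
        have h2 := congrFun ha' k
        rw [h1, h2]
        simp [Finsupp.coe_equivFunOnFinite_symm]
      rw [hnsub, hSₗ₁ a']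
      -- count the set
      have hak : ∀ k, a k = C k + ℓ * a' k := by
        intro k
        have h2 := congrFun ha' k
        simp only [Pi.smul_apply, smul_eq_mul] at h2
        have := hlek k
        omega
      have hseteq : {b' : Fin r → ℕ | (∑ i, p i • v i) + ℓ • ∑ i, b' i • v i = a}
          = {b' : Fin r → ℕ | ∑ i, b' i • v i = a'} := by
        ext b'
        simp only [Set.mem_setOf_eq]
        constructor
        · intro h
          funext k
          have hk := congrFun h k
          simp only [Pi.add_apply, Pi.smul_apply, smul_eq_mul] at hk
          have h1 : (∑ i, p i • v i) k = C k := (hCcoe k).symm ▸ by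
            simp [Finset.sum_apply, Pi.smul_apply, smul_eq_mul]
          rw [h1] at hk
          have := hak k
          have : ℓ * ((∑ i, b' i • v i) k) = ℓ * a' k := by omega
          exact Nat.eq_of_mul_eq_mul_left hℓ0 this
        · intro h
          rw [h]
          funext k
          simp only [Pi.add_apply, Pi.smul_apply, smul_eq_mul]
          have h1 : (∑ i, p i • v i) k = C k := by
            rw [hCcoe k]
            simp [Finset.sum_apply, Pi.smul_apply, smul_eq_mul]
          rw [h1]
          exact (hak k).symm
      rw [hseteq, ← hs a']
    · push_neg at hex
      have hz := hSₗ₂ (fun k => a k - C k) (fun a' h => hex a' h)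
      have hnsub : n - C = Finsupp.equivFunOnFinite.symm (fun k => a k - C k) := by
        ext k
        rw [Finsupp.coe_tsub]
        simp [Finsupp.coe_equivFunOnFinite_symm]
        rfl
      rw [hnsub, hz]
      have hempty : {b' : Fin r → ℕ | (∑ i, p i • v i) + ℓ • ∑ i, b' i • v i = a} = ∅ := by
        ext b'
        simp only [Set.mem_setOf_eq, Set.mem_empty_iff_false, iff_false]
        intro h
        apply hex (fun k => (∑ i, b' i • v i) k)
        funext k
        have hk := congrFun h k
        simp only [Pi.add_apply, Pi.smul_apply, smul_eq_mul] at hk ⊢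
        have h1 : (∑ i, p i • v i) k = C k := by
          rw [hCcoe k]
          simp [Finset.sum_apply, Pi.smul_apply, smul_eq_mul]
        rw [h1] at hk
        omega
      rw [hempty]
      simp
  · rw [if_neg hle]
    have hempty : {b' : Fin r → ℕ | (∑ i, p i • v i) + ℓ • ∑ i, b' i • v i = a} = ∅ := by
      ext b'
      simp only [Set.mem_setOf_eq, Set.mem_empty_iff_false, iff_false]
      intro h
      apply hle
      rw [Finsupp.le_def]
      intro k
      have han : a k = n k := rfl
      have hk := congrFun h k
      simp only [Pi.add_apply, Pi.smul_apply, smul_eq_mul] at hk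
      have h1 : (∑ i, p i • v i) k = C k := by
        rw [hCcoe k]
        simp [Finset.sum_apply, Pi.smul_apply, smul_eq_mul]
      rw [h1] at hk
      omega
    rw [hempty]
    simp
end
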